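/- Let ζ₁ be a p-th post-birth representative for [b, i] and ζ₂ a p-th pre-death representative for [i, d], and suppose their cycles at index i, z_i and z'_i, are homologous in K_i via z_i + z'_i = ∂A with A a (p+1)-chain of K_i. Then the concatenation ζ₁ ‖ ζ₂, obtained by replacing the chain c_{i−1} of ζ₁ by c_{i−1} + A and splicing to ζ₂, is a p-th representative sequence for [b, d]. -/

import Mathlib

open Finset

variable {V : Type} [DecidableEq V]

/-- The facets of a simplex `σ` (a simplex is a finite set of vertices):
all subsets obtained by removing one vertex. -/
def facets (σ : Finset V) : Finset (Finset V) := σ.image (fun v => σ.erase v)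

/-- The mod-2 boundary of a chain `c` (a chain is a set of simplices):
a simplex `τ` belongs to `bd c` iff `τ` is a facet of an odd number of members of `c`. -/
def bd (c : Finset (Finset V)) : Finset (Finset V) :=
  (c.biUnion facets).filter (fun τ => Odd ((c.filter (fun ρ => τ ∈ facets ρ)).card))

/-- A finite simplicial complex: simplices are nonempty finite sets of vertices,
closed under taking nonempty subsets. -/
def IsComplex (K : Finset (Finset V)) : Prop :=
  (∀ σ ∈ K, σ.Nonempty) ∧ ∀ σ ∈ K, ∀ τ, τ ⊆ σ → τ.Nonempty → τ ∈ K

/-- `z` is a chain in `L` all of whose simplices have exactly `d` vertices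
(i.e. a `(d-1)`-dimensional chain, with mod-2 chains identified with sets of simplices). -/
def IsChainIn (L : Finset (Finset V)) (d : ℕ) (z : Finset (Finset V)) : Prop :=
  z ⊆ L ∧ ∀ ρ ∈ z, ρ.card = d

/-- `z` is a cycle in `L` made of simplices with `d` vertices (a `(d-1)`-dimensional cycle). -/
def IsCycleIn (L : Finset (Finset V)) (d : ℕ) (z : Finset (Finset V)) : Prop :=
  IsChainIn L d z ∧ bd z = ∅

/-- `x` is the boundary of some chain of `L` whose simplices have `d` vertices. -/
def IsBoundaryIn (L : Finset (Finset V)) (d : ℕ) (x : Finset (Finset V)) : Prop :=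
  ∃ c, IsChainIn L d c ∧ bd c = x

/-- One step of a simplex-wise zigzag filtration: the next complex is obtained by
adding or deleting exactly one simplex. -/
def SimplexwiseStep (K K' : Finset (Finset V)) : Prop :=
  (∃ σ ∉ K, K' = insert σ K) ∨ (∃ σ ∉ K', K = insert σ K')

/-- A simplex-wise zigzag filtration starting and ending with the empty complex,
given as the list of its complexes. -/
def ValidFilt (F : List (Finset (Finset V))) : Prop :=
  F ≠ [] ∧ F.head? = some ∅ ∧ F.getLast? = some ∅ ∧
  (∀ K ∈ F, IsComplex K) ∧ F.Chain' SimplexwiseStep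

/-- Forward switch: interchange two consecutive simplex additions
`↪σ ↪τ ⇝ ↪τ ↪σ` (requires `σ ⊄ τ`). -/
def ForwardSwitch (F F' : List (Finset (Finset V))) : Prop :=
  ∃ (pre post : List (Finset (Finset V))) (A : Finset (Finset V)) (σ τ : Finset V),
    σ ∉ A ∧ τ ∉ A ∧ σ ≠ τ ∧ ¬ σ ⊆ τ ∧
    F = pre ++ A :: insert σ A :: insert τ (insert σ A) :: post ∧
    F' = pre ++ A :: insert τ A :: insert τ (insert σ A) :: post

/-- Backward switch: interchange two consecutive simplex deletions
`↩σ ↩τ ⇝ ↩τ ↩σ` (requires `τ ⊄ σ`). -/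
def BackwardSwitch (F F' : List (Finset (Finset V))) : Prop :=
  ∃ (pre post : List (Finset (Finset V))) (A : Finset (Finset V)) (σ τ : Finset V),
    σ ∉ A ∧ τ ∉ A ∧ σ ≠ τ ∧ ¬ τ ⊆ σ ∧
    F = pre ++ insert τ (insert σ A) :: insert τ A :: A :: post ∧
    F' = pre ++ insert τ (insert σ A) :: insert σ A :: A :: post

/-- Outward switch: `↪σ ↩τ ⇝ ↩τ ↪σ` (requires `σ ≠ τ`). -/
def OutwardSwitch (F F' : List (Finset (Finset V))) : Prop :=
  ∃ (pre post : List (Finset (Finset V))) (N : Finset (Finset V)) (σ τ : Finset V),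
    σ ∉ N ∧ τ ∉ N ∧ σ ≠ τ ∧
    F = pre ++ insert τ N :: insert σ (insert τ N) :: insert σ N :: post ∧
    F' = pre ++ insert τ N :: N :: insert σ N :: post

/-- Inward switch: `↩σ ↪τ ⇝ ↪τ ↩σ` (requires `σ ≠ τ`). -/
def InwardSwitch (F F' : List (Finset (Finset V))) : Prop :=
  ∃ (pre post : List (Finset (Finset V))) (N : Finset (Finset V)) (σ τ : Finset V),
    σ ∉ N ∧ τ ∉ N ∧ σ ≠ τ ∧
    F = pre ++ insert σ N :: N :: insert τ N :: post ∧
    F' = pre ++ insert σ N :: insert τ (insert σ N) :: insert τ N :: post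

/-- Outward expansion: replace a complex `K` (with `σ ∈ K` having no proper
cofaces) by `K ↩σ K∖{σ} ↪σ K`. -/
def OutwardExpansion (F F' : List (Finset (Finset V))) : Prop :=
  ∃ (pre post : List (Finset (Finset V))) (K : Finset (Finset V)) (σ : Finset V),
    σ ∈ K ∧ (∀ τ ∈ K, σ ⊆ τ → τ = σ) ∧
    F = pre ++ K :: post ∧
    F' = pre ++ K :: K.erase σ :: K :: post

/-- Outward contraction: the reverse of outward expansion. -/
def OutwardContraction (F F' : List (Finset (Finset V))) : Prop :=
  OutwardExpansion F' F

/-- Inward expansion: replace a complex `K` (with `σ ∉ K` and every proper face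
of `σ` in `K`) by `K ↪σ K∪{σ} ↩σ K`. -/
def InwardExpansion (F F' : List (Finset (Finset V))) : Prop :=
  ∃ (pre post : List (Finset (Finset V))) (K : Finset (Finset V)) (σ : Finset V),
    σ ∉ K ∧ σ.Nonempty ∧ (∀ τ, τ ⊂ σ → τ.Nonempty → τ ∈ K) ∧
    F = pre ++ K :: post ∧
    F' = pre ++ K :: insert σ K :: K :: post

/-- Inward contraction: the reverse of inward expansion. -/
def InwardContraction (F F' : List (Finset (Finset V))) : Prop :=
  InwardExpansion F' F

/-- The eight atomic update operations on zigzag filtrations. -/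
def Atomic (F F' : List (Finset (Finset V))) : Prop :=
  ForwardSwitch F F' ∨ BackwardSwitch F F' ∨ OutwardSwitch F F' ∨ InwardSwitch F F' ∨
  OutwardExpansion F F' ∨ OutwardContraction F F' ∨
  InwardExpansion F F' ∨ InwardContraction F F'

/-- There is a cycle of `L` (of the dimension of `σ`) containing `σ`;
equivalently, the addition of `σ` creating `L` is a birth. -/
def HasCycleWith (L : Finset (Finset V)) (σ : Finset V) : Prop :=
  ∃ z, IsCycleIn L σ.card z ∧ σ ∈ z

/-- `b` is a birth index of the filtration `F`: the arrow between `K_{b-1}` and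
`K_b` is a forward addition which creates a class, or a backward deletion whose
reversed addition does not create a class (so the backward map is surjective). -/
def IsBirthIndex (F : List (Finset (Finset V))) (b : ℕ) : Prop :=
  1 ≤ b ∧ b < F.length ∧
  ((∃ σ ∉ F.getD (b - 1) ∅, F.getD b ∅ = insert σ (F.getD (b - 1) ∅) ∧
      HasCycleWith (F.getD b ∅) σ) ∨
   (∃ σ ∉ F.getD b ∅, F.getD (b - 1) ∅ = insert σ (F.getD b ∅) ∧
      ¬ HasCycleWith (F.getD (b - 1) ∅) σ))

/-- `d` is a death index of the filtration `F`: the arrow between `K_d` and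
`K_{d+1}` is a forward addition which kills a class, or a backward deletion of a
simplex lying in a cycle (so the backward map is injective). -/
def IsDeathIndex (F : List (Finset (Finset V))) (d : ℕ) : Prop :=
  d + 1 < F.length ∧
  ((∃ σ ∉ F.getD d ∅, F.getD (d + 1) ∅ = insert σ (F.getD d ∅) ∧
      ¬ HasCycleWith (F.getD (d + 1) ∅) σ) ∨
   (∃ σ ∉ F.getD (d + 1) ∅, F.getD d ∅ = insert σ (F.getD (d + 1) ∅) ∧
      HasCycleWith (F.getD d ∅) σ))

open Classical in
/-- The set `P(F)` of birth indices of `F`. -/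
noncomputable def BirthSet (F : List (Finset (Finset V))) : Finset ℕ :=
  (Finset.range F.length).filter (fun b => IsBirthIndex F b)

open Classical in
/-- The set `N(F)` of death indices of `F`. -/
noncomputable def DeathSet (F : List (Finset (Finset V))) : Finset ℕ :=
  (Finset.range F.length).filter (fun d => IsDeathIndex F d)

/-- A `p`-th representative sequence for the interval `[b,d]` of the filtration
`F`: `p`-cycles `z i ⊆ K_i` for `b ≤ i ≤ d` and `(p+1)`-chains `c i` (in the
larger of `K_i`, `K_{i+1}`) with `z i + z (i+1) = ∂(c i)`, subject to the birth
condition at `b` and the death condition at `d` of Definition 2.2. -/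
def RepSeq (F : List (Finset (Finset V))) (p b d : ℕ)
    (z c : ℕ → Finset (Finset V)) : Prop :=
  b ≤ d ∧
  (∀ i, b ≤ i → i ≤ d → IsCycleIn (F.getD i ∅) (p + 1) (z i)) ∧
  (∀ i, b ≤ i → i < d →
    (F.getD i ∅ ⊆ F.getD (i + 1) ∅ →
      IsChainIn (F.getD (i + 1) ∅) (p + 2) (c i) ∧
      bd (c i) = symmDiff (z i) (z (i + 1))) ∧
    (F.getD (i + 1) ∅ ⊆ F.getD i ∅ →
      IsChainIn (F.getD i ∅) (p + 2) (c i) ∧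
      bd (c i) = symmDiff (z i) (z (i + 1)))) ∧
  -- birth condition
  (∀ σ, σ ∉ F.getD b ∅ → F.getD (b - 1) ∅ = insert σ (F.getD b ∅) →
    IsChainIn (F.getD (b - 1) ∅) (p + 2) (c (b - 1)) ∧
    bd (c (b - 1)) = z b ∧ σ ∈ c (b - 1)) ∧
  (∀ σ, σ ∉ F.getD (b - 1) ∅ → F.getD b ∅ = insert σ (F.getD (b - 1) ∅) →
    σ ∈ z b) ∧
  -- death condition
  (∀ σ, σ ∉ F.getD d ∅ → F.getD (d + 1) ∅ = insert σ (F.getD d ∅) →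
    IsChainIn (F.getD (d + 1) ∅) (p + 2) (c d) ∧
    bd (c d) = z d ∧ σ ∈ c d) ∧
  (∀ σ, σ ∉ F.getD (d + 1) ∅ → F.getD d ∅ = insert σ (F.getD (d + 1) ∅) →
    σ ∈ z d)

/-- A `p`-th post-birth representative for `[b, i]`: a representative sequence
satisfying the birth condition at `b`, with no condition at `i`. -/
def PostBirthRep (F : List (Finset (Finset V))) (p b i : ℕ)
    (z c : ℕ → Finset (Finset V)) : Prop :=
  b ≤ i ∧
  (∀ j, b ≤ j → j ≤ i → IsCycleIn (F.getD j ∅) (p + 1) (z j)) ∧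
  (∀ j, b ≤ j → j < i →
    (F.getD j ∅ ⊆ F.getD (j + 1) ∅ →
      IsChainIn (F.getD (j + 1) ∅) (p + 2) (c j) ∧
      bd (c j) = symmDiff (z j) (z (j + 1))) ∧
    (F.getD (j + 1) ∅ ⊆ F.getD j ∅ →
      IsChainIn (F.getD j ∅) (p + 2) (c j) ∧
      bd (c j) = symmDiff (z j) (z (j + 1)))) ∧
  (∀ σ, σ ∉ F.getD b ∅ → F.getD (b - 1) ∅ = insert σ (F.getD b ∅) →
    IsChainIn (F.getD (b - 1) ∅) (p + 2) (c (b - 1)) ∧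
    bd (c (b - 1)) = z b ∧ σ ∈ c (b - 1)) ∧
  (∀ σ, σ ∉ F.getD (b - 1) ∅ → F.getD b ∅ = insert σ (F.getD (b - 1) ∅) →
    σ ∈ z b)

/-- A `p`-th pre-death representative for `[i, d]`: a representative sequence
satisfying the death condition at `d`, with no condition at `i`. -/
def PreDeathRep (F : List (Finset (Finset V))) (p i d : ℕ)
    (z c : ℕ → Finset (Finset V)) : Prop :=
  i ≤ d ∧
  (∀ j, i ≤ j → j ≤ d → IsCycleIn (F.getD j ∅) (p + 1) (z j)) ∧
  (∀ j, i ≤ j → j < d →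
    (F.getD j ∅ ⊆ F.getD (j + 1) ∅ →
      IsChainIn (F.getD (j + 1) ∅) (p + 2) (c j) ∧
      bd (c j) = symmDiff (z j) (z (j + 1))) ∧
    (F.getD (j + 1) ∅ ⊆ F.getD j ∅ →
      IsChainIn (F.getD j ∅) (p + 2) (c j) ∧
      bd (c j) = symmDiff (z j) (z (j + 1)))) ∧
  (∀ σ, σ ∉ F.getD d ∅ → F.getD (d + 1) ∅ = insert σ (F.getD d ∅) →
    IsChainIn (F.getD (d + 1) ∅) (p + 2) (c d) ∧
    bd (c d) = z d ∧ σ ∈ c d) ∧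
  (∀ σ, σ ∉ F.getD (d + 1) ∅ → F.getD d ∅ = insert σ (F.getD (d + 1) ∅) →
    σ ∈ z d)

/-- The birth order `b₁ ≺_b b₂`: either `b₁ < b₂` and the arrow into `K_{b₂}` is
forward, or `b₁ > b₂` and the arrow into `K_{b₁}` is backward. -/
def BirthOrder (F : List (Finset (Finset V))) (b₁ b₂ : ℕ) : Prop :=
  (b₁ < b₂ ∧ F.getD (b₂ - 1) ∅ ⊆ F.getD b₂ ∅) ∨
  (b₂ < b₁ ∧ F.getD b₁ ∅ ⊆ F.getD (b₁ - 1) ∅)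

/-! On the chains `c j` with `j + 1 < i` and `j ≥ i` the concatenation just inherits the links
of `ζ₁` and `ζ₂`; only the link `c (i-1) + A` between `z (i-1)` and `z' i` is new, and it works
because `∂(c (i-1) + A) = (z (i-1) + z i) + (z i + z' i)`.  When `b = i` the birth condition
has to be re-checked for the new cycle `z' b` and chain `c (b-1) + A`: for a backward arrow the
deleted simplex `σ` is not in `A ⊆ K_b`; for a forward arrow `σ` has no coface in `K_b`, so it
is not in `∂A` and stays in `z' b = z b + ∂A`. -/

open scoped symmDiff

theorem Finset.card_symmDiff_add_two_mul_card_inter {α : Type*} [DecidableEq α]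
    (s t : Finset α) : #(s ∆ t) + 2 * #(s ∩ t) = #s + #t := by
  have hsub : s ∩ t ⊆ s ∪ t := inter_subset_left.trans subset_union_left
  rw [symmDiff_eq_sup_sdiff_inf, sup_eq_union, inf_eq_inter, card_sdiff_of_subset hsub, two_mul,
    ← add_assoc, Nat.sub_add_cancel (card_le_card hsub), card_union_add_card_inter]

theorem mem_bd {c : Finset (Finset V)} {τ : Finset V} :
    τ ∈ bd c ↔ Odd #(c.filter (fun ρ => τ ∈ facets ρ)) := by
  refine ⟨fun h => (mem_filter.mp h).2, fun h => mem_filter.mpr ⟨?_, h⟩⟩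
  obtain ⟨ρ, hρ⟩ := card_pos.mp h.pos
  exact mem_biUnion.mpr ⟨ρ, (mem_filter.mp hρ).1, (mem_filter.mp hρ).2⟩

theorem bd_symmDiff (x y : Finset (Finset V)) : bd (x ∆ y) = bd x ∆ bd y := by
  ext τ
  have hfilter : (x ∆ y).filter (fun ρ => τ ∈ facets ρ)
      = x.filter (fun ρ => τ ∈ facets ρ) ∆ y.filter (fun ρ => τ ∈ facets ρ) := by
    ext ρ; simp only [mem_filter, mem_symmDiff]; tauto
  have hcard := card_symmDiff_add_two_mul_card_inter
    (x.filter (fun ρ => τ ∈ facets ρ)) (y.filter (fun ρ => τ ∈ facets ρ))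
  simp only [mem_symmDiff, mem_bd, hfilter, Nat.odd_iff]
  omega

theorem IsChainIn.symmDiff {L x y : Finset (Finset V)} {d : ℕ}
    (hx : IsChainIn L d x) (hy : IsChainIn L d y) : IsChainIn L d (x ∆ y) := by
  refine ⟨fun ρ hρ => ?_, fun ρ hρ => ?_⟩ <;> rcases mem_symmDiff.mp hρ with ⟨h, -⟩ | ⟨h, -⟩
  exacts [hx.1 h, hy.1 h, hx.2 ρ h, hy.2 ρ h]

theorem ValidFilt.isComplex_getD {F : List (Finset (Finset V))} (hF : ValidFilt F) (n : ℕ) :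
    IsComplex (F.getD n ∅) := by
  by_cases hn : n < F.length
  · rw [List.getD_eq_getElem _ _ hn]
    exact hF.2.2.2.1 _ (List.getElem_mem hn)
  · rw [List.getD_eq_default _ _ (not_lt.mp hn)]
    exact ⟨fun σ h => absurd h (notMem_empty σ), fun σ h => absurd h (notMem_empty σ)⟩

theorem IsComplex.notMem_bd_of_subset {M A : Finset (Finset V)} {σ : Finset V}
    (hM : IsComplex M) (hσ : σ.Nonempty) (hσM : σ ∉ M) (hA : A ⊆ M) : σ ∉ bd A := by
  intro hbd
  obtain ⟨ρ, hρ⟩ := card_pos.mp (mem_bd.mp hbd).pos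
  obtain ⟨hρA, hσρ⟩ := mem_filter.mp hρ
  obtain ⟨v, -, rfl⟩ := mem_image.mp hσρ
  exact hσM (hM.2 ρ (hA hρA) _ (erase_subset v ρ) hσ)

theorem IsComplex.mem_of_bd_eq_symmDiff {M A y y' : Finset (Finset V)} {σ : Finset V}
    (hM : IsComplex M) (hσ : σ.Nonempty) (hσM : σ ∉ M)
    (hA : IsChainIn (insert σ M) (#σ + 1) A) (hbdA : bd A = y ∆ y') (hy : σ ∈ y) :
    σ ∈ y' := by
  have hσA : σ ∉ A := fun h => by simpa using hA.2 σ h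
  have hnot := hM.notMem_bd_of_subset hσ hσM ((subset_insert_iff_of_notMem hσA).mp hA.1)
  rw [hbdA, mem_symmDiff] at hnot
  tauto

/-- The condition `RepSeq` imposes on the chain `c j` between `z j` and `z (j + 1)`. -/
def IsLink (K K' : Finset (Finset V)) (p : ℕ) (y y' x : Finset (Finset V)) : Prop :=
  (K ⊆ K' → IsChainIn K' (p + 2) x ∧ bd x = y ∆ y') ∧
  (K' ⊆ K → IsChainIn K (p + 2) x ∧ bd x = y ∆ y')

theorem IsLink.symmDiff {K K' y y' y'' x A : Finset (Finset V)} {p : ℕ}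
    (h : IsLink K K' p y y' x) (hA : IsChainIn K' (p + 2) A) (hbdA : bd A = y' ∆ y'') :
    IsLink K K' p y y'' (x ∆ A) := by
  have hbd : bd x = y ∆ y' → bd (x ∆ A) = y ∆ y'' := fun hx => by
    rw [bd_symmDiff, hx, hbdA, symmDiff_assoc, symmDiff_symmDiff_cancel_left]
  refine ⟨fun hK => ?_, fun hK => ?_⟩
  · exact ⟨(h.1 hK).1.symmDiff hA, hbd (h.1 hK).2⟩
  · exact ⟨(h.2 hK).1.symmDiff ⟨hA.1.trans hK, hA.2⟩, hbd (h.2 hK).2⟩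

section ConcatCycles

variable {α : Type*} (z z' : ℕ → α) (i : ℕ)

/-- The cycles of `ζ₁ ‖ ζ₂`. -/
def concatCycles : ℕ → α :=
  fun j => if j < i then z j else z' j

variable {z z' i} {j : ℕ}

theorem concatCycles_of_lt (h : j < i) : concatCycles z z' i j = z j := if_pos h

theorem concatCycles_of_le (h : i ≤ j) : concatCycles z z' i j = z' j := if_neg (by omega)

end ConcatCycles

section ConcatChains

variable {α : Type*} [Max α] [SDiff α] (c c' : ℕ → α) (A : α) (i : ℕ)

/-- The chains of `ζ₁ ‖ ζ₂`, where `A` is the homology between `z i` and `z' i`. -/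
def concatChains : ℕ → α :=
  fun j => if j + 1 < i then c j else if j + 1 = i then c j ∆ A else c' j

variable {c c' A i} {j : ℕ}

theorem concatChains_of_succ_lt (h : j + 1 < i) : concatChains c c' A i j = c j := if_pos h

theorem concatChains_of_succ_eq (h : j + 1 = i) : concatChains c c' A i j = c j ∆ A := by
  simp [concatChains, h]

theorem concatChains_of_le (h : i ≤ j) : concatChains c c' A i j = c' j := by
  simp [concatChains, show ¬ j + 1 < i by omega, show j + 1 ≠ i by omega]

end ConcatChains

section Concat

variable {F : List (Finset (Finset V))} {p b i d : ℕ} {z c z' c' : ℕ → Finset (Finset V)}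
  {A : Finset (Finset V)} {σ : Finset V}

theorem concat_isCycleIn (h₁ : PostBirthRep F p b i z c) (h₂ : PreDeathRep F p i d z' c')
    (j : ℕ) (hbj : b ≤ j) (hjd : j ≤ d) :
    IsCycleIn (F.getD j ∅) (p + 1) (concatCycles z z' i j) := by
  rcases lt_or_ge j i with hji | hij
  · rw [concatCycles_of_lt hji]
    exact h₁.2.1 j hbj hji.le
  · rw [concatCycles_of_le hij]
    exact h₂.2.1 j hij hjd

theorem concat_isLink (h₁ : PostBirthRep F p b i z c) (h₂ : PreDeathRep F p i d z' c')
    (hA : IsChainIn (F.getD i ∅) (p + 2) A) (hbdA : bd A = z i ∆ z' i)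
    (j : ℕ) (hbj : b ≤ j) (hjd : j < d) :
    IsLink (F.getD j ∅) (F.getD (j + 1) ∅) p (concatCycles z z' i j)
      (concatCycles z z' i (j + 1)) (concatChains c c' A i j) := by
  rcases lt_trichotomy (j + 1) i with hji | rfl | hij
  · rw [concatCycles_of_lt (by omega), concatCycles_of_lt hji, concatChains_of_succ_lt hji]
    exact h₁.2.2.1 j hbj (by omega)
  · rw [concatCycles_of_lt (by omega), concatCycles_of_le le_rfl, concatChains_of_succ_eq rfl]
    exact IsLink.symmDiff (h₁.2.2.1 j hbj (by omega)) hA hbdA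
  · rw [concatCycles_of_le (by omega), concatCycles_of_le (by omega), concatChains_of_le (by omega)]
    exact h₂.2.2.1 j (by omega) hjd

theorem concat_birth_of_deletion (h₁ : PostBirthRep F p b i z c)
    (hA : IsChainIn (F.getD i ∅) (p + 2) A) (hbdA : bd A = z i ∆ z' i)
    (hσ : σ ∉ F.getD b ∅) (hK : F.getD (b - 1) ∅ = insert σ (F.getD b ∅)) :
    IsChainIn (F.getD (b - 1) ∅) (p + 2) (concatChains c c' A i (b - 1)) ∧
      bd (concatChains c c' A i (b - 1)) = concatCycles z z' i b ∧
      σ ∈ concatChains c c' A i (b - 1) := by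
  have hb : b ≠ 0 := by
    rintro rfl
    exact hσ (hK ▸ mem_insert_self σ _)
  obtain ⟨hch, hbd, hmem⟩ := h₁.2.2.2.1 σ hσ hK
  rcases h₁.1.lt_or_eq with hbi | rfl
  · rw [concatChains_of_succ_lt (by omega), concatCycles_of_lt hbi]
    exact ⟨hch, hbd, hmem⟩
  · rw [concatChains_of_succ_eq (by omega), concatCycles_of_le le_rfl]
    refine ⟨hch.symmDiff ⟨hA.1.trans (hK ▸ subset_insert σ _), hA.2⟩, ?_, ?_⟩
    · rw [bd_symmDiff, hbd, hbdA, symmDiff_symmDiff_cancel_left]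
    · exact mem_symmDiff.mpr (.inl ⟨hmem, fun hσA => hσ (hA.1 hσA)⟩)

theorem concat_birth_of_addition (hF : ValidFilt F) (h₁ : PostBirthRep F p b i z c)
    (hA : IsChainIn (F.getD i ∅) (p + 2) A) (hbdA : bd A = z i ∆ z' i)
    (hσ : σ ∉ F.getD (b - 1) ∅) (hK : F.getD b ∅ = insert σ (F.getD (b - 1) ∅)) :
    σ ∈ concatCycles z z' i b := by
  have hz := h₁.2.2.2.2 σ hσ hK
  rcases h₁.1.lt_or_eq with hbi | rfl
  · rwa [concatCycles_of_lt hbi]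
  · rw [concatCycles_of_le le_rfl]
    have hcard : #σ = p + 1 := (h₁.2.1 b le_rfl le_rfl).1.2 σ hz
    exact (hF.isComplex_getD (b - 1)).mem_of_bd_eq_symmDiff (card_pos.mp (by omega)) hσ
      (by rwa [← hK, hcard]) hbdA hz

theorem concat_death_of_addition (h₂ : PreDeathRep F p i d z' c')
    (hσ : σ ∉ F.getD d ∅) (hK : F.getD (d + 1) ∅ = insert σ (F.getD d ∅)) :
    IsChainIn (F.getD (d + 1) ∅) (p + 2) (concatChains c c' A i d) ∧
      bd (concatChains c c' A i d) = concatCycles z z' i d ∧ σ ∈ concatChains c c' A i d := by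
  rw [concatChains_of_le h₂.1, concatCycles_of_le h₂.1]
  exact h₂.2.2.2.1 σ hσ hK

theorem concat_death_of_deletion (h₂ : PreDeathRep F p i d z' c')
    (hσ : σ ∉ F.getD (d + 1) ∅) (hK : F.getD d ∅ = insert σ (F.getD (d + 1) ∅)) :
    σ ∈ concatCycles z z' i d := by
  rw [concatCycles_of_le h₂.1]
  exact h₂.2.2.2.2 σ hσ hK

end Concat

theorem stmt17_general {V : Type} [DecidableEq V]
    (F : List (Finset (Finset V))) (hF : ValidFilt F)
    (p b i d : ℕ)
    (z c z' c' : ℕ → Finset (Finset V))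
    (h₁ : PostBirthRep F p b i z c) (h₂ : PreDeathRep F p i d z' c')
    (A : Finset (Finset V)) (hA : IsChainIn (F.getD i ∅) (p + 2) A)
    (hbdA : bd A = symmDiff (z i) (z' i)) :
    RepSeq F p b d
      (fun j => if j < i then z j else z' j)
      (fun j => if j + 1 < i then c j
        else if j + 1 = i then symmDiff (c j) A else c' j) :=
  ⟨h₁.1.trans h₂.1, concat_isCycleIn h₁ h₂, concat_isLink h₁ h₂ hA hbdA,
    fun _ => concat_birth_of_deletion h₁ hA hbdA, fun _ => concat_birth_of_addition hF h₁ hA hbdA,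
    fun _ => concat_death_of_addition h₂, fun _ => concat_death_of_deletion h₂⟩

/-- Concatenation of representatives.  Let `ζ₁ = (z, c)` be a `p`-th post-birth
representative for `[b, i]` and `ζ₂ = (z', c')` a `p`-th pre-death representative
for `[i, d]`, whose cycles at index `i` are homologous in `K_i`:
`z i + z' i = ∂A` for a `(p+1)`-chain `A` of `K_i`.  Then the concatenation
`ζ₁ ‖ ζ₂`, obtained by replacing the chain `c (i-1)` by `c (i-1) + A` and
splicing to `ζ₂`, is a `p`-th representative sequence for `[b, d]`. -/
theorem stmt17 {V : Type} [DecidableEq V]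
    (F : List (Finset (Finset V))) (hF : ValidFilt F)
    (p b i d : ℕ) (hbi : b ≤ i) (hid : i ≤ d)
    (z c z' c' : ℕ → Finset (Finset V))
    (h₁ : PostBirthRep F p b i z c) (h₂ : PreDeathRep F p i d z' c')
    (A : Finset (Finset V)) (hA : IsChainIn (F.getD i ∅) (p + 2) A)
    (hbdA : bd A = symmDiff (z i) (z' i)) :
    RepSeq F p b d
      (fun j => if j < i then z j else z' j)
      (fun j => if j + 1 < i then c j
        else if j + 1 = i then symmDiff (c j) A else c' j) :=
  stmt17_general F hF p b i d z c z' c' h₁ h₂ A hA hbdA
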